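/- arXiv:1604.01610 — 3 statements merged into one kernel-verified Lean document; each statement's English description precedes it below -/
import Mathlib

section
/- Let 𝕂 be ℝ or ℂ, let m ≥ k ≥ 1 be integers, let p be a real number with m < p ≤ 2m, and let n_1, …, n_k be positive integers with n_1 + ⋯ + n_k = m. Suppose ρ' > 0 and there is a constant C such that ( ∑_{i_1,…,i_k=1}^{n} |T(e_{i_1}^{n_1}, …, e_{i_k}^{n_k})|^{ρ'} )^{1/ρ'} ≤ C · ‖T‖ for every positive integer n and every m-linear form T : ℓ_p^n × ⋯ × ℓ_p^n → 𝕂. Then ρ' ≥ p/(p−m). -/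
/-!
The diagonal form `T_n(x) = ∑_a ∏_s x_s(a)` on `ℓ_p^n` has norm at most `n^(1 - m/p)` by Hölder's
inequality, while its coefficients at the `n` constant multi-indices are all `1`. The hypothesis
therefore gives `n^(1/ρ') ≤ C n^(1 - m/p)` for every `n`, which forces `1/ρ' ≤ (p - m)/p`.
-/

open Finset NNReal MeasureTheory
open scoped ENNReal

theorem NNReal.sum_prod_le_card_rpow_mul_prod_Lp {ι α : Type*} [Fintype ι] [Fintype α]
    {p : ℝ} (hp : 0 < p) (hιp : (Fintype.card ι : ℝ) ≤ p) (f : ι → α → ℝ≥0) :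
    ∑ a, ∏ s, f s a ≤
      (Fintype.card α : ℝ≥0) ^ (1 - Fintype.card ι / p) * ∏ s, (∑ a, f s a ^ p) ^ (1 / p) := by
  let _ : MeasurableSpace α := ⊤
  -- Hölder for the counting measure, the constant `1` carrying the spare exponent `1 - |ι|/p`
  have hq : 0 ≤ 1 - Fintype.card ι / p := by rw [sub_nonneg, div_le_one hp]; exact hιp
  have holder := ENNReal.lintegral_mul_prod_norm_pow_le (μ := Measure.count) univ
    (g := fun _ => 1) (f := fun s a => ((f s a : ENNReal) ^ p))
    Measurable.of_discrete.aemeasurable (fun _ _ => Measurable.of_discrete.aemeasurable)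
    _ (p := fun _ => 1 / p) (by simp; ring) hq (fun _ _ => by positivity)
  simp only [lintegral_fintype, Measure.count_singleton, mul_one, ENNReal.one_rpow, one_mul,
    ← ENNReal.rpow_mul, mul_one_div_cancel hp.ne', ENNReal.rpow_one, sum_const, card_univ,
    nsmul_one] at holder
  rw [← ENNReal.coe_le_coe]
  push_cast [ENNReal.coe_rpow_of_nonneg _ hp.le, ENNReal.coe_rpow_of_nonneg _ hq,
    ENNReal.coe_rpow_of_nonneg _ (one_div_pos.2 hp).le]
  exact holder

theorem Real.le_of_forall_natCast_rpow_le_mul_rpow {a b C : ℝ}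
    (h : ∀ n : ℕ, 0 < n → (n : ℝ) ^ a ≤ C * (n : ℝ) ^ b) : a ≤ b := by
  by_contra! hba
  have hgrow : Filter.Tendsto (fun n : ℕ => (n : ℝ) ^ (a - b)) Filter.atTop Filter.atTop :=
    (_root_.tendsto_rpow_atTop (sub_pos.2 hba)).comp tendsto_natCast_atTop_atTop
  obtain ⟨n, hCn, hn⟩ :=
    ((hgrow.eventually_gt_atTop C).and (Filter.eventually_gt_atTop 0)).exists
  have hn' : (0 : ℝ) < n := by exact_mod_cast hn
  rw [Real.rpow_sub hn', lt_div_iff₀ (by positivity)] at hCn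
  linarith [h n hn]

section DiagonalForm

variable (𝕂 : Type*) [NontriviallyNormedField 𝕂] (ι α : Type*) [Fintype ι] [Fintype α]
  (q : ℝ≥0∞)

noncomputable def diagonalForm :
    ContinuousMultilinearMap 𝕂 (fun _ : ι => PiLp q (fun _ : α => 𝕂)) 𝕂 :=
  ∑ a, (ContinuousMultilinearMap.mkPiAlgebra 𝕂 ι 𝕂).compContinuousLinearMap
    fun _ => PiLp.proj q (fun _ : α => 𝕂) a

variable {𝕂 ι α q}

theorem diagonalForm_apply (x : ι → PiLp q (fun _ : α => 𝕂)) :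
    diagonalForm 𝕂 ι α q x = ∑ a, ∏ s, x s a := by
  simp [diagonalForm]

theorem diagonalForm_apply_single [Nonempty ι] [DecidableEq α] (c : α) :
    diagonalForm 𝕂 ι α q (fun _ => (WithLp.equiv q (α → 𝕂)).symm (Pi.single c 1)) = 1 := by
  simp [diagonalForm_apply]

theorem norm_diagonalForm_le [Fact (1 ≤ q)] (hq : q ≠ ⊤)
    (hιq : (Fintype.card ι : ℝ) ≤ q.toReal) :
    ‖diagonalForm 𝕂 ι α q‖ ≤ (Fintype.card α : ℝ) ^ (1 - Fintype.card ι / q.toReal) := by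
  refine ContinuousMultilinearMap.opNorm_le_bound (by positivity) fun x => ?_
  have hq0 : 0 < q.toReal := ENNReal.toReal_pos (zero_lt_one.trans_le Fact.out).ne' hq
  rw [← NNReal.coe_natCast, ← NNReal.coe_rpow]
  simp only [← coe_nnnorm, ← NNReal.coe_prod, ← NNReal.coe_mul, NNReal.coe_le_coe]
  calc ‖diagonalForm 𝕂 ι α q x‖₊ ≤ ∑ a, ∏ s, ‖x s a‖₊ := by
        rw [diagonalForm_apply]
        exact (nnnorm_sum_le _ _).trans_eq (by simp only [nnnorm_prod])
    _ ≤ _ := NNReal.sum_prod_le_card_rpow_mul_prod_Lp hq0 hιq fun s a => ‖x s a‖₊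
    _ = _ := by simp only [PiLp.nnnorm_eq_sum hq]

theorem card_le_sum_norm_diagonalForm_single_rpow [Nonempty ι] {κ : Type*} [Fintype κ]
    [DecidableEq κ] [Nonempty κ] [DecidableEq α] (π : ι → κ) (r : ℝ) :
    (Fintype.card α : ℝ) ≤ ∑ i : κ → α,
      ‖diagonalForm 𝕂 ι α q
        (fun s => (WithLp.equiv q (α → 𝕂)).symm (Pi.single (i (π s)) 1))‖ ^ r := by
  calc (Fintype.card α : ℝ)
      = ∑ i ∈ univ.map ⟨Function.const κ, Function.const_injective⟩,
          ‖diagonalForm 𝕂 ι α q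
            (fun s => (WithLp.equiv q (α → 𝕂)).symm (Pi.single (i (π s)) 1))‖ ^ r := by
        simp only [sum_map, Function.Embedding.coeFn_mk, Function.const_apply,
          diagonalForm_apply_single, norm_one, Real.one_rpow, sum_const, card_univ,
          nsmul_eq_mul, mul_one]
    _ ≤ _ := sum_le_sum_of_subset_of_nonneg (subset_univ _) fun _ _ _ => by positivity

end DiagonalForm

/-- **Optimality of the exponent `ρ = p/(p-m)` in the case `m < p ≤ 2m`.**
If `ρ' > 0` and there is a constant `C` such that
`(∑_{i₁,…,i_k=1}^n |T(e_{i₁}^{n₁}, …, e_{i_k}^{n_k})|^{ρ'})^{1/ρ'} ≤ C ⬝ ‖T‖`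
for every `n ≥ 1` and every `m`-linear form `T : ℓ_p^n × ⋯ × ℓ_p^n → 𝕂`,
then `ρ' ≥ p/(p-m)`. -/
theorem stmt3 (𝕂 : Type*) [RCLike 𝕂] (m k : ℕ) (hk : 1 ≤ k) (hkm : k ≤ m)
    (p : ℝ) (hmp : (m : ℝ) < p)
    (ν : Fin k → ℕ) (hsum : ∑ j, ν j = m)
    (ρ' : ℝ) (hρ' : 0 < ρ') (C : ℝ)
    (hC : ∀ n : ℕ, 0 < n →
      haveI : Fact (1 ≤ ENNReal.ofReal p) := ⟨ENNReal.one_le_ofReal.mpr (by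
        have h1 : (1 : ℝ) ≤ (m : ℝ) := by exact_mod_cast hk.trans hkm
        linarith)⟩
      ∀ T : ContinuousMultilinearMap 𝕂
          (fun _ : (Σ j : Fin k, Fin (ν j)) => PiLp (ENNReal.ofReal p) (fun _ : Fin n => 𝕂)) 𝕂,
        (∑ i : Fin k → Fin n,
            ‖T (fun s => (WithLp.equiv (ENNReal.ofReal p) (Fin n → 𝕂)).symm
                (Pi.single (i s.1) 1))‖ ^ ρ') ^ (1 / ρ')
          ≤ C * ‖T‖) :
    p / (p - m) ≤ ρ' := by
  have hm : (1 : ℝ) ≤ m := by exact_mod_cast hk.trans hkm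
  have hp : 0 < p := by linarith
  have : Fact (1 ≤ ENNReal.ofReal p) := ⟨ENNReal.one_le_ofReal.mpr (by linarith)⟩
  have hcard : Fintype.card (Σ j : Fin k, Fin (ν j)) = m := by simp [hsum]
  have : Nonempty (Σ j : Fin k, Fin (ν j)) := Fintype.card_pos_iff.mp (by omega)
  have : Nonempty (Fin k) := ⟨⟨0, hk⟩⟩
  have growth : ∀ n : ℕ, 0 < n → (n : ℝ) ^ (1 / ρ') ≤ max C 0 * (n : ℝ) ^ (1 - m / p) := by
    intro n hn
    set T := diagonalForm 𝕂 (Σ j : Fin k, Fin (ν j)) (Fin n) (ENNReal.ofReal p)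
    have hnorm := norm_diagonalForm_le (𝕂 := 𝕂) (α := Fin n) ENNReal.ofReal_ne_top
      (by rw [hcard, ENNReal.toReal_ofReal hp.le]; exact hmp.le)
    rw [hcard, ENNReal.toReal_ofReal hp.le, Fintype.card_fin] at hnorm
    have hcoeff := card_le_sum_norm_diagonalForm_single_rpow (𝕂 := 𝕂)
      (ι := Σ j : Fin k, Fin (ν j)) (α := Fin n) (q := ENNReal.ofReal p) Sigma.fst ρ'
    rw [Fintype.card_fin] at hcoeff
    calc (n : ℝ) ^ (1 / ρ') ≤ _ := by gcongr
      _ ≤ C * ‖T‖ := hC n hn T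
      _ ≤ max C 0 * ‖T‖ := by gcongr; exact le_max_left C 0
      _ ≤ max C 0 * (n : ℝ) ^ (1 - m / p) := by gcongr
  have key := Real.le_of_forall_natCast_rpow_le_mul_rpow growth
  rw [one_sub_div hp.ne', div_le_div_iff₀ hρ' hp] at key
  rw [div_le_iff₀ (by linarith)]
  linarith
end

section
/- Let 𝕂 be ℝ or ℂ, let m ≥ k ≥ 1 be integers, let p > m be a real number, and let n_1, …, n_k be positive integers with n_1 + ⋯ + n_k = m. Set r_j = p/n_j for j = 1, …, k. Then for every positive integer n and every k-linear form A : ℓ_{r_1}^n × ⋯ × ℓ_{r_k}^n → 𝕂 there exists an m-linear form T : ℓ_p^n × ⋯ × ℓ_p^n → 𝕂 such that T(e_{i_1}^{n_1}, …, e_{i_k}^{n_k}) = A(e_{i_1}, …, e_{i_k}) for all indices i_1, …, i_k ∈ {1, …, n}, and ‖T‖ ≤ ‖A‖. -/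
/-!
Take `T(x) = A(x₁₁ ⋯ x₁ₙ₁, …, x_k₁ ⋯ x_kₙₖ)`, the products being coordinatewise. Since
`nⱼ/p = 1/p + ⋯ + 1/p`, the generalized Hölder inequality bounds the `ℓ_{p/nⱼ}` norm of a
coordinatewise product of `nⱼ` vectors of `ℓ_p` by the product of their norms, so `‖T‖ ≤ ‖A‖`;
and a coordinatewise power of a unit vector `eᵢ` is `eᵢ` again.
-/

open Finset
open scoped ENNReal

theorem ENNReal.sum_prod_rpow_le_prod_sum_rpow {ι α : Type*} [Fintype ι] [Fintype α]
    (f : ι → α → ℝ≥0∞) {w : ι → ℝ} (hw : ∀ i, 0 ≤ w i) (hw1 : ∑ i, w i = 1) :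
    ∑ a, ∏ i, f i a ^ w i ≤ ∏ i, (∑ a, f i a) ^ w i := by
  let _ : MeasurableSpace α := ⊤
  simpa [MeasureTheory.lintegral_count, tsum_fintype] using
    ENNReal.lintegral_prod_norm_pow_le (μ := MeasureTheory.Measure.count) univ
      (fun i _ => (measurable_from_top (f := f i)).aemeasurable) hw1 (fun i _ => hw i)

theorem Real.sum_prod_rpow_le_prod_sum_rpow {ι α : Type*} [Fintype ι] [Fintype α]
    {f : ι → α → ℝ} (hf : ∀ i a, 0 ≤ f i a) {w : ι → ℝ} (hw : ∀ i, 0 ≤ w i)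
    (hw1 : ∑ i, w i = 1) :
    ∑ a, ∏ i, f i a ^ w i ≤ ∏ i, (∑ a, f i a) ^ w i := by
  have hsum (i : ι) : 0 ≤ ∑ a, f i a := sum_nonneg fun a _ => hf i a
  rw [← ENNReal.ofReal_le_ofReal_iff
      (prod_nonneg fun i _ => Real.rpow_nonneg (hsum i) _),
    ENNReal.ofReal_sum_of_nonneg fun a _ => prod_nonneg fun i _ => Real.rpow_nonneg (hf i a) _,
    ENNReal.ofReal_prod_of_nonneg fun i _ => Real.rpow_nonneg (hsum i) _]
  convert ENNReal.sum_prod_rpow_le_prod_sum_rpow (fun i a => ENNReal.ofReal (f i a)) hw hw1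
    using 2 with a - i - i
  · rw [ENNReal.ofReal_prod_of_nonneg fun i _ => Real.rpow_nonneg (hf i a) _]
    exact prod_congr rfl fun i _ => (ENNReal.ofReal_rpow_of_nonneg (hf i a) (hw i)).symm
  · rw [← ENNReal.ofReal_rpow_of_nonneg (hsum i) (hw i),
      ENNReal.ofReal_sum_of_nonneg fun a _ => hf i a]

theorem Nat.pos_of_one_le_ofReal_div {p : ℝ} {ν : ℕ} (h : 1 ≤ ENNReal.ofReal (p / ν)) : 0 < ν :=
  Nat.pos_of_ne_zero (by rintro rfl; simp at h)

namespace PiLp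

theorem norm_toLp_prod_le {𝕂 ι : Type*} [NormedField 𝕂] [Fintype ι] {ν : ℕ} (hν : 0 < ν)
    {p : ℝ} [Fact (1 ≤ ENNReal.ofReal p)] (x : Fin ν → PiLp (ENNReal.ofReal p) (fun _ : ι => 𝕂)) :
    ‖WithLp.toLp (ENNReal.ofReal (p / ν)) (∏ l, WithLp.ofLp (x l))‖ ≤ ∏ l, ‖x l‖ := by
  have hp : 0 < p := zero_lt_one.trans_le (ENNReal.one_le_ofReal.mp Fact.out)
  have hν' : (0 : ℝ) < ν := Nat.cast_pos.mpr hν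
  have hr : 0 < p / ν := div_pos hp hν'
  have hnorm (l : Fin ν) : ‖x l‖ ^ p = ∑ i, ‖x l i‖ ^ p := by
    rw [norm_eq_sum (by rwa [ENNReal.toReal_ofReal hp.le]), ENNReal.toReal_ofReal hp.le, one_div,
      ← Real.rpow_mul (sum_nonneg fun i _ => by positivity), inv_mul_cancel₀ hp.ne',
      Real.rpow_one]
  rw [norm_eq_sum (by rwa [ENNReal.toReal_ofReal hr.le]), ENNReal.toReal_ofReal hr.le, one_div,
    Real.rpow_inv_le_iff_of_pos (sum_nonneg fun i _ => by positivity)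
      (prod_nonneg fun l _ => norm_nonneg _) hr]
  calc ∑ i, ‖(∏ l, WithLp.ofLp (x l)) i‖ ^ (p / ν)
      = ∑ i, ∏ l, (‖x l i‖ ^ p) ^ (ν : ℝ)⁻¹ := by
        refine sum_congr rfl fun i _ => ?_
        rw [Finset.prod_apply, norm_prod, ← Real.finsetProd_rpow _ _ fun l _ => norm_nonneg _]
        refine prod_congr rfl fun l _ => ?_
        rw [← Real.rpow_mul (norm_nonneg _), div_eq_mul_inv]
    _ ≤ ∏ l, (∑ i, ‖x l i‖ ^ p) ^ (ν : ℝ)⁻¹ :=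
        Real.sum_prod_rpow_le_prod_sum_rpow (fun _ _ => by positivity)
          (fun _ => by positivity) (by simp [mul_inv_cancel₀ hν'.ne'])
    _ = (∏ l, ‖x l‖) ^ (p / ν) := by
        rw [← Real.finsetProd_rpow _ _ fun l _ => norm_nonneg _]
        refine prod_congr rfl fun l _ => ?_
        rw [← hnorm, ← Real.rpow_mul (norm_nonneg _), div_eq_mul_inv]

end PiLp

namespace ContinuousMultilinearMap

variable {𝕜 ι : Type*} [NontriviallyNormedField 𝕜] [Fintype ι] {β : ι → Type*}
  [∀ i, Fintype (β i)] {E : ι → Type*} [∀ i, NormedAddCommGroup (E i)] [∀ i, NormedSpace 𝕜 (E i)]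
  {F : (i : ι) → β i → Type*} [∀ i b, NormedAddCommGroup (F i b)] [∀ i b, NormedSpace 𝕜 (F i b)]
  {G : Type*} [NormedAddCommGroup G] [NormedSpace 𝕜 G]

noncomputable def compContinuousMultilinearMap (g : ContinuousMultilinearMap 𝕜 E G)
    (f : ∀ i, ContinuousMultilinearMap 𝕜 (F i) (E i)) :
    ContinuousMultilinearMap 𝕜 (fun j : Σ i, β i => F j.1 j.2) G :=
  (g.toMultilinearMap.compMultilinearMap fun i => (f i).toMultilinearMap).mkContinuous
    (‖g‖ * ∏ i, ‖f i‖) fun m => by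
      calc ‖g fun i => f i (Sigma.curry m i)‖
          ≤ ‖g‖ * ∏ i, (‖f i‖ * ∏ b, ‖m ⟨i, b⟩‖) :=
            g.le_opNorm_mul_prod_of_le fun i => (f i).le_opNorm _
        _ = (‖g‖ * ∏ i, ‖f i‖) * ∏ j, ‖m j‖ := by
            rw [prod_mul_distrib, Fintype.prod_sigma, mul_assoc]

theorem compContinuousMultilinearMap_apply (g : ContinuousMultilinearMap 𝕜 E G)
    (f : ∀ i, ContinuousMultilinearMap 𝕜 (F i) (E i)) (m : ∀ j : Σ i, β i, F j.1 j.2) :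
    g.compContinuousMultilinearMap f m = g fun i => f i (Sigma.curry m i) :=
  rfl

theorem norm_compContinuousMultilinearMap_le (g : ContinuousMultilinearMap 𝕜 E G)
    (f : ∀ i, ContinuousMultilinearMap 𝕜 (F i) (E i)) :
    ‖g.compContinuousMultilinearMap f‖ ≤ ‖g‖ * ∏ i, ‖f i‖ :=
  MultilinearMap.mkContinuous_norm_le _ (by positivity) _

end ContinuousMultilinearMap

namespace PiLp

variable {𝕂 ι : Type*} [NontriviallyNormedField 𝕂] [Fintype ι] {ν : ℕ} {p : ℝ}
  [Fact (1 ≤ ENNReal.ofReal p)] [Fact (1 ≤ ENNReal.ofReal (p / ν))]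

variable (𝕂 ι ν p) in
noncomputable def mulMultilinear :
    ContinuousMultilinearMap 𝕂 (fun _ : Fin ν => PiLp (ENNReal.ofReal p) (fun _ : ι => 𝕂))
      (PiLp (ENNReal.ofReal (p / ν)) (fun _ : ι => 𝕂)) :=
  ((WithLp.linearEquiv _ 𝕂 (ι → 𝕂)).symm.toLinearMap.compMultilinearMap
    ((MultilinearMap.mkPiAlgebra 𝕂 (Fin ν) (ι → 𝕂)).compLinearMap
      fun _ => (WithLp.linearEquiv _ 𝕂 (ι → 𝕂)).toLinearMap)).mkContinuous 1
    fun x => by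
      rw [one_mul]
      exact norm_toLp_prod_le (Nat.pos_of_one_le_ofReal_div (p := p) Fact.out) x

theorem mulMultilinear_apply (x : Fin ν → PiLp (ENNReal.ofReal p) (fun _ : ι => 𝕂)) :
    mulMultilinear 𝕂 ι ν p x = WithLp.toLp _ (∏ l, WithLp.ofLp (x l)) :=
  rfl

theorem norm_mulMultilinear_le : ‖mulMultilinear 𝕂 ι ν p‖ ≤ 1 :=
  MultilinearMap.mkContinuous_norm_le _ zero_le_one _

theorem mulMultilinear_const_single [DecidableEq ι] (i : ι) :
    mulMultilinear 𝕂 ι ν p (fun _ => WithLp.toLp _ (Pi.single i 1)) =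
      WithLp.toLp _ (Pi.single i 1) := by
  have hidem : IsIdempotentElem (Pi.single i 1 : ι → 𝕂) := by
    simp [IsIdempotentElem, ← Pi.single_mul]
  rw [mulMultilinear_apply, prod_const, card_univ, Fintype.card_fin,
    hidem.pow_eq (Nat.pos_of_one_le_ofReal_div (p := p) Fact.out).ne']

end PiLp

/-- **Lifting of `k`-linear forms to block `m`-linear forms.** Let `p > m` and
`r_j = p / n_j`. Every `k`-linear form `A : ℓ_{r₁}^n × ⋯ × ℓ_{r_k}^n → 𝕂` admits an
`m`-linear form `T : ℓ_p^n × ⋯ × ℓ_p^n → 𝕂` with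
`T(e_{i₁}^{n₁}, …, e_{i_k}^{n_k}) = A(e_{i₁}, …, e_{i_k})` for all indices and `‖T‖ ≤ ‖A‖`. -/
theorem stmt10 (𝕂 : Type*) [RCLike 𝕂] (m k : ℕ) (hk : 1 ≤ k) (hkm : k ≤ m)
    (p : ℝ) (hmp : (m : ℝ) < p)
    (ν : Fin k → ℕ) (hν : ∀ j, 0 < ν j) (hsum : ∑ j, ν j = m) :
    ∀ n : ℕ, 0 < n →
      haveI : Fact (1 ≤ ENNReal.ofReal p) := ⟨ENNReal.one_le_ofReal.mpr (by
        have h1 : (1 : ℝ) ≤ (m : ℝ) := by exact_mod_cast hk.trans hkm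
        linarith)⟩
      haveI : ∀ j : Fin k, Fact (1 ≤ ENNReal.ofReal (p / ν j)) := fun j =>
        ⟨ENNReal.one_le_ofReal.mpr (by
          have h1 : (ν j : ℝ) ≤ m := by
            exact_mod_cast hsum ▸
              Finset.single_le_sum (f := fun i => ν i) (fun i _ => Nat.zero_le _)
                (Finset.mem_univ j)
          have h2 : (0 : ℝ) < ν j := by exact_mod_cast hν j
          rw [le_div_iff₀ h2]; linarith)⟩
      ∀ A : ContinuousMultilinearMap 𝕂
          (fun j : Fin k => PiLp (ENNReal.ofReal (p / ν j)) (fun _ : Fin n => 𝕂)) 𝕂,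
        ∃ T : ContinuousMultilinearMap 𝕂
            (fun _ : (Σ j : Fin k, Fin (ν j)) => PiLp (ENNReal.ofReal p) (fun _ : Fin n => 𝕂)) 𝕂,
          (∀ i : Fin k → Fin n,
            T (fun s => (WithLp.equiv (ENNReal.ofReal p) (Fin n → 𝕂)).symm
                (Pi.single (i s.1) 1)) =
              A (fun j => (WithLp.equiv (ENNReal.ofReal (p / ν j)) (Fin n → 𝕂)).symm
                (Pi.single (i j) 1))) ∧
          ‖T‖ ≤ ‖A‖ := by
  intro n _ A
  have hp : (1 : ℝ) ≤ p := by
    have : (1 : ℝ) ≤ m := by exact_mod_cast hk.trans hkm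
    linarith
  have hνp (j : Fin k) : (ν j : ℝ) ≤ p := by
    have : ν j ≤ m := hsum ▸ single_le_sum (fun i _ => Nat.zero_le (ν i)) (mem_univ j)
    exact (Nat.cast_le.mpr this).trans hmp.le
  have : Fact (1 ≤ ENNReal.ofReal p) := ⟨ENNReal.one_le_ofReal.mpr hp⟩
  have (j : Fin k) : Fact (1 ≤ ENNReal.ofReal (p / ν j)) :=
    ⟨ENNReal.one_le_ofReal.mpr <| (one_le_div (Nat.cast_pos.mpr (hν j))).mpr (hνp j)⟩
  refine ⟨A.compContinuousMultilinearMap fun j => PiLp.mulMultilinear 𝕂 (Fin n) (ν j) p,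
    fun i => ?_, ?_⟩
  · simp only [WithLp.equiv_symm_apply, ContinuousMultilinearMap.compContinuousMultilinearMap_apply]
    congr 1
    funext j
    exact PiLp.mulMultilinear_const_single (𝕂 := 𝕂) (ν := ν j) (p := p) (i j)
  · calc _ ≤ ‖A‖ * ∏ j, ‖PiLp.mulMultilinear 𝕂 (Fin n) (ν j) p‖ :=
          A.norm_compContinuousMultilinearMap_le _
      _ ≤ ‖A‖ * ∏ _j : Fin k, 1 := by
          gcongr with j
          exact PiLp.norm_mulMultilinear_le
      _ = ‖A‖ := by rw [prod_const_one, mul_one]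
end

section
/- (Kahane–Salem–Zygmund inequality, in the form used in the paper.) Let 𝕂 be ℝ or ℂ and let k be a positive integer. There is a constant C_k > 0 such that: for all r_1, …, r_k ∈ [2, ∞) and every positive integer n there exists a k-linear form A : ℓ_{r_1}^n × ⋯ × ℓ_{r_k}^n → 𝕂 whose coefficients satisfy A(e_{i_1}, …, e_{i_k}) ∈ {−1, +1} for all i_1, …, i_k ∈ {1, …, n}, and such that ‖A‖ ≤ C_k · n^{(k+1)/2 − (1/r_1 + ⋯ + 1/r_k)}. -/
/-!
Choose the signs at random. For fixed `y₁, …, y_k` in the unit ball of `ℓ₂ⁿ` the value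
`∑ ε_i y₁(i₁) ⋯ y_k(i_k)` of the form is a Rademacher sum whose coefficient vector has
`ℓ₂`-norm at most `1`, so by Hoeffding's inequality it exceeds `t` only for a fraction
`4 exp(-t²/4)` of the sign patterns. A union bound over `k`-tuples from a `1/(2k+2)`-net of the
unit ball, which has `(4k+5)^{O(n)}` points, gives signs for which the form is `O(√n)` on the
net, and multilinearity extends this bound to the whole unit ball at the cost of a factor `2`.
Passing from `ℓ₂ⁿ` to `ℓ_rⁿ` costs `n^{1/2 - 1/r}` in each variable, by Hölder's inequality.
-/

open Finset Real Metric MeasureTheory Module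
open scoped ENNReal NNReal

def boolSign {R : Type*} [Ring R] (b : Bool) : R := if b then 1 else -1

@[simp] lemma boolSign_true {R : Type*} [Ring R] : (boolSign true : R) = 1 := rfl
@[simp] lemma boolSign_false {R : Type*} [Ring R] : (boolSign false : R) = -1 := rfl

section Hoeffding

variable {I : Type*} [Fintype I] [DecidableEq I]

lemma sum_exp_sum_boolSign_mul_le (b : I → ℝ) :
    ∑ ε : I → Bool, exp (∑ i, boolSign (ε i) * b i)
      ≤ 2 ^ Fintype.card I * exp (∑ i, b i ^ 2 / 2) := by
  calc ∑ ε : I → Bool, exp (∑ i, boolSign (ε i) * b i)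
      = ∏ i, ∑ s : Bool, exp (boolSign s * b i) := by
        simp only [Real.exp_sum, Fintype.prod_sum]
    _ = ∏ i, 2 * cosh (b i) := by
        refine Finset.prod_congr rfl fun i _ => ?_
        simp [Real.cosh_eq]
        ring
    _ ≤ ∏ i, 2 * exp (b i ^ 2 / 2) := by
        gcongr with i
        exact cosh_le_exp_half_sq _
    _ = 2 ^ Fintype.card I * exp (∑ i, b i ^ 2 / 2) := by
        rw [Finset.prod_mul_distrib, Finset.prod_const, Real.exp_sum, Finset.card_univ]

lemma card_filter_le_sum_boolSign_mul_le {a : I → ℝ} (ha : ∑ i, a i ^ 2 ≤ 1) {t : ℝ} (ht : 0 ≤ t) :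
    (#{ε : I → Bool | t ≤ ∑ i, boolSign (ε i) * a i} : ℝ)
      ≤ 2 ^ Fintype.card I * exp (-(t ^ 2) / 2) := by
  set S : (I → Bool) → ℝ := fun ε => ∑ i, boolSign (ε i) * a i
  have hmgf : ∑ ε, exp (t * S ε) ≤ 2 ^ Fintype.card I * exp (t ^ 2 / 2) := by
    have h := sum_exp_sum_boolSign_mul_le (fun i => t * a i)
    have hsq : ∑ i, (t * a i) ^ 2 / 2 ≤ t ^ 2 / 2 := by
      simp only [mul_pow, ← Finset.sum_div, ← Finset.mul_sum]
      gcongr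
      nlinarith [sq_nonneg t]
    simp only [S, Finset.mul_sum]
    calc _ = ∑ ε : I → Bool, exp (∑ i, boolSign (ε i) * (t * a i)) := by
          congr! 3 with ε - i; ring
      _ ≤ _ := h.trans (by gcongr)
  have hmarkov : (#{ε | t ≤ S ε} : ℝ) * exp (t ^ 2) ≤ ∑ ε, exp (t * S ε) := by
    rw [← nsmul_eq_mul, ← Finset.sum_const]
    calc ∑ _ ∈ {ε | t ≤ S ε}, exp (t ^ 2) ≤ ∑ ε ∈ {ε | t ≤ S ε}, exp (t * S ε) :=
          Finset.sum_le_sum fun ε hε => by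
            rw [sq]; gcongr; exact (Finset.mem_filter.1 hε).2
      _ ≤ _ := Finset.sum_le_sum_of_subset_of_nonneg (Finset.filter_subset _ _)
          fun _ _ _ => (exp_pos _).le
  calc (#{ε | t ≤ S ε} : ℝ) ≤ 2 ^ Fintype.card I * exp (t ^ 2 / 2) / exp (t ^ 2) := by
        rw [le_div_iff₀ (exp_pos _)]; exact hmarkov.trans hmgf
    _ = _ := by rw [mul_div_assoc, ← exp_sub]; ring_nf

lemma card_filter_le_abs_sum_boolSign_mul_le {a : I → ℝ} (ha : ∑ i, a i ^ 2 ≤ 1) {t : ℝ}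
    (ht : 0 ≤ t) :
    (#{ε : I → Bool | t ≤ |∑ i, boolSign (ε i) * a i|} : ℝ)
      ≤ 2 * (2 ^ Fintype.card I * exp (-(t ^ 2) / 2)) := by
  have hneg : ∑ i, (-a i) ^ 2 ≤ 1 := by simpa only [neg_sq] using ha
  have hsub : ({ε | t ≤ |∑ i, boolSign (ε i) * a i|} : Finset (I → Bool)) ⊆
      ({ε | t ≤ ∑ i, boolSign (ε i) * a i} : Finset (I → Bool)) ∪
        ({ε | t ≤ ∑ i, boolSign (ε i) * -a i} : Finset (I → Bool)) := by
    intro ε hε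
    simp only [Finset.mem_filter, Finset.mem_univ, true_and, Finset.mem_union, mul_neg,
      Finset.sum_neg_distrib] at hε ⊢
    exact le_abs.1 hε
  calc (#{ε : I → Bool | t ≤ |∑ i, boolSign (ε i) * a i|} : ℝ)
      ≤ #{ε : I → Bool | t ≤ ∑ i, boolSign (ε i) * a i}
        + #{ε : I → Bool | t ≤ ∑ i, boolSign (ε i) * -a i} := by
        exact_mod_cast (Finset.card_le_card hsub).trans (Finset.card_union_le _ _)
    _ ≤ _ := by
        linarith [card_filter_le_sum_boolSign_mul_le ha ht,
          card_filter_le_sum_boolSign_mul_le hneg ht]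

section RCLike

variable {𝕂 : Type*} [RCLike 𝕂]

lemma RCLike.re_boolSign_mul (b : Bool) (z : 𝕂) :
    RCLike.re (boolSign b * z) = boolSign b * RCLike.re z := by
  cases b <;> simp

lemma RCLike.im_boolSign_mul (b : Bool) (z : 𝕂) :
    RCLike.im (boolSign b * z) = boolSign b * RCLike.im z := by
  cases b <;> simp

lemma card_filter_lt_norm_sum_boolSign_mul_le {a : I → 𝕂} (ha : ∑ i, ‖a i‖ ^ 2 ≤ 1) {t : ℝ}
    (ht : 0 ≤ t) :
    (#{ε : I → Bool | t < ‖∑ i, boolSign (ε i) * a i‖} : ℝ)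
      ≤ 4 * (2 ^ Fintype.card I * exp (-(t ^ 2) / 4)) := by
  set u := t / √2
  have hu : 0 ≤ u := by positivity
  have hexp : -(u ^ 2) / 2 = -(t ^ 2) / 4 := by
    rw [div_pow, sq_sqrt zero_le_two]; ring
  have hre : ∑ i, RCLike.re (a i) ^ 2 ≤ 1 := le_trans (Finset.sum_le_sum fun i _ => by
    rw [← sq_abs]; gcongr; exact RCLike.abs_re_le_norm _) ha
  have him : ∑ i, RCLike.im (a i) ^ 2 ≤ 1 := le_trans (Finset.sum_le_sum fun i _ => by
    rw [← sq_abs]; gcongr; exact RCLike.abs_im_le_norm _) ha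
  have hsub : ({ε | t < ‖∑ i, boolSign (ε i) * a i‖} : Finset (I → Bool)) ⊆
      ({ε | u ≤ |∑ i, boolSign (ε i) * RCLike.re (a i)|} : Finset (I → Bool)) ∪
        ({ε | u ≤ |∑ i, boolSign (ε i) * RCLike.im (a i)|} : Finset (I → Bool)) := by
    intro ε hε
    simp only [Finset.mem_filter, Finset.mem_univ, true_and, Finset.mem_union] at hε ⊢
    set z := ∑ i, boolSign (ε i) * a i
    have hz : RCLike.re z = ∑ i, boolSign (ε i) * RCLike.re (a i) ∧
        RCLike.im z = ∑ i, boolSign (ε i) * RCLike.im (a i) := by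
      simp only [z, map_sum, RCLike.re_boolSign_mul, RCLike.im_boolSign_mul, and_self]
    rw [← hz.1, ← hz.2]
    have hsq : t ^ 2 < RCLike.re z ^ 2 + RCLike.im z ^ 2 := by
      have hnorm : ‖z‖ ^ 2 = RCLike.re z ^ 2 + RCLike.im z ^ 2 := by
        rw [RCLike.norm_sq_eq_def]; ring
      rw [← hnorm]; gcongr
    have hu2 : u ^ 2 = t ^ 2 / 2 := by rw [div_pow, sq_sqrt zero_le_two]
    by_contra! h
    have hre_lt := pow_lt_pow_left₀ h.1 (abs_nonneg _) two_ne_zero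
    have him_lt := pow_lt_pow_left₀ h.2 (abs_nonneg _) two_ne_zero
    rw [sq_abs] at hre_lt him_lt
    linarith
  calc (#{ε : I → Bool | t < ‖∑ i, boolSign (ε i) * a i‖} : ℝ)
      ≤ #{ε : I → Bool | u ≤ |∑ i, boolSign (ε i) * RCLike.re (a i)|}
        + #{ε : I → Bool | u ≤ |∑ i, boolSign (ε i) * RCLike.im (a i)|} := by
        exact_mod_cast (Finset.card_le_card hsub).trans (Finset.card_union_le _ _)
    _ ≤ _ := by
        have hre_card := card_filter_le_abs_sum_boolSign_mul_le hre hu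
        have him_card := card_filter_le_abs_sum_boolSign_mul_le him hu
        rw [hexp] at hre_card him_card
        linarith

lemma exists_boolSign_forall_norm_sum_mul_le {Y : Type*} {S : Finset Y} {a : Y → I → 𝕂}
    (ha : ∀ y ∈ S, ∑ i, ‖a y i‖ ^ 2 ≤ 1) {t : ℝ} (ht : 0 ≤ t)
    (hS : S.card * (4 * exp (-(t ^ 2) / 4)) < 1) :
    ∃ ε : I → Bool, ∀ y ∈ S, ‖∑ i, boolSign (ε i) * a y i‖ ≤ t := by
  by_contra! hbad
  have hcover : (Finset.univ : Finset (I → Bool)) ⊆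
      S.biUnion fun y => {ε | t < ‖∑ i, boolSign (ε i) * a y i‖} := by
    intro ε _
    obtain ⟨y, hy, hlt⟩ := hbad ε
    exact Finset.mem_biUnion.2 ⟨y, hy, by simpa using hlt⟩
  have hcard : (2 : ℝ) ^ Fintype.card I
      ≤ S.card * (4 * (2 ^ Fintype.card I * exp (-(t ^ 2) / 4))) :=
    calc (2 : ℝ) ^ Fintype.card I = (Finset.univ : Finset (I → Bool)).card := by
          simp
      _ ≤ ∑ y ∈ S, (#{ε : I → Bool | t < ‖∑ i, boolSign (ε i) * a y i‖} : ℝ) := by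
          exact_mod_cast (Finset.card_le_card hcover).trans Finset.card_biUnion_le
      _ ≤ ∑ y ∈ S, 4 * (2 ^ Fintype.card I * exp (-(t ^ 2) / 4)) :=
          Finset.sum_le_sum fun y hy => card_filter_lt_norm_sum_boolSign_mul_le (ha y hy) ht
      _ = _ := by rw [Finset.sum_const, nsmul_eq_mul]
  have h2 : (0 : ℝ) < 2 ^ Fintype.card I := by positivity
  nlinarith

end RCLike
end Hoeffding

section Net

variable {E : Type*} [NormedAddCommGroup E] [NormedSpace ℝ E] [FiniteDimensional ℝ E]

lemma card_le_of_isSeparated_of_subset_closedBall {δ : ℝ≥0} (hδ : 0 < δ) {C : Finset E}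
    (hC : (C : Set E) ⊆ closedBall 0 1) (hsep : IsSeparated δ (C : Set E)) :
    (C.card : ℝ) ≤ (1 + 2 / δ) ^ finrank ℝ E := by
  borelize E
  set μ := (finBasis ℝ E).addHaar
  set d := finrank ℝ E
  have hdisj : (C : Set E).PairwiseDisjoint fun c => ball c (δ / 2) := fun a ha b hb hab =>
    ball_disjoint_ball <| by
      have : (δ : ℝ≥0∞) < edist a b := hsep ha hb hab
      rw [edist_nndist, ENNReal.coe_lt_coe, ← NNReal.coe_lt_coe, coe_nndist] at this
      linarith
  have hunion : (⋃ c ∈ C, ball c (δ / 2)) ⊆ ball (0 : E) (1 + δ / 2) := by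
    simp only [Set.iUnion_subset_iff]
    intro c hc x hx
    rw [mem_ball] at hx ⊢
    have := mem_closedBall.1 (hC hc)
    linarith [dist_triangle x c 0]
  have hvol : (C.card : ℝ≥0∞) * ENNReal.ofReal ((δ / 2) ^ d) * μ (ball 0 1)
      ≤ ENNReal.ofReal ((1 + δ / 2) ^ d) * μ (ball 0 1) :=
    calc (C.card : ℝ≥0∞) * ENNReal.ofReal ((δ / 2) ^ d) * μ (ball 0 1)
        = ∑ c ∈ C, μ (ball c (δ / 2)) := by
          rw [Finset.sum_congr rfl fun c _ => Measure.addHaar_ball_of_pos μ c (by positivity),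
            Finset.sum_const, nsmul_eq_mul, mul_assoc]
      _ = μ (⋃ c ∈ C, ball c (δ / 2)) :=
          (measure_biUnion_finset hdisj fun _ _ => measurableSet_ball).symm
      _ ≤ μ (ball (0 : E) (1 + δ / 2)) := measure_mono hunion
      _ = ENNReal.ofReal ((1 + δ / 2) ^ d) * μ (ball 0 1) :=
          Measure.addHaar_ball_of_pos μ _ (by positivity)
  rw [ENNReal.mul_le_mul_iff_left (measure_ball_pos μ 0 one_pos).ne' measure_ball_lt_top.ne,
    ← ENNReal.ofReal_natCast, ← ENNReal.ofReal_mul (by positivity),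
    ENNReal.ofReal_le_ofReal_iff (by positivity), ← le_div_iff₀ (by positivity), ← div_pow] at hvol
  refine hvol.trans_eq (congrArg (· ^ d) ?_)
  field_simp
  ring

lemma exists_finset_isCover_closedBall {δ : ℝ≥0} (hδ : 0 < δ) :
    ∃ T : Finset E, (T : Set E) ⊆ closedBall 0 1 ∧ IsCover δ (closedBall 0 1) (T : Set E) ∧
      (T.card : ℝ) ≤ (1 + 2 / δ) ^ finrank ℝ E := by
  classical
  set P : Finset E → Prop := fun C => (C : Set E) ⊆ closedBall 0 1 ∧ IsSeparated δ (C : Set E)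
  have hbound : ∀ C, P C → (C.card : ℝ) ≤ (1 + 2 / δ) ^ finrank ℝ E := fun C hC =>
    card_le_of_isSeparated_of_subset_closedBall hδ hC.1 hC.2
  have hbdd : BddAbove (Finset.card '' {C | P C}) :=
    ⟨⌊(1 + 2 / (δ : ℝ)) ^ finrank ℝ E⌋₊, by
      rintro _ ⟨C, hC, rfl⟩; exact Nat.le_floor (hbound C hC)⟩
  have hP_empty : P ∅ := ⟨by simp, by simp⟩
  obtain ⟨T, hT, hTmax⟩ := Nat.sSup_mem (Set.image_nonempty.2 ⟨∅, hP_empty⟩) hbdd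
  refine ⟨T, hT.1, IsCover.of_maximal_isSeparated ⟨hT, fun D hD hTD x hx => ?_⟩, hbound T hT⟩
  by_contra hxT
  have hP : P (insert x T) := by
    have hsub : ((insert x T : Finset E) : Set E) ⊆ D := by
      rw [Finset.coe_insert]; exact Set.insert_subset hx hTD
    exact ⟨hsub.trans hD.1, hD.2.subset hsub⟩
  have := le_csSup hbdd (Set.mem_image_of_mem Finset.card hP)
  rw [← hTmax, Finset.card_insert_of_notMem hxT] at this
  omega

end Net

namespace ContinuousMultilinearMap

variable {𝕜 : Type*} [RCLike 𝕜] {ι : Type*} [Fintype ι] {E : ι → Type*}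
  [∀ i, NormedAddCommGroup (E i)] [∀ i, NormedSpace 𝕜 (E i)]
  {G : Type*} [NormedAddCommGroup G] [NormedSpace 𝕜 G]

lemma opNorm_le_of_forall_norm_le_one (f : ContinuousMultilinearMap 𝕜 E G) {M : ℝ} (hM : 0 ≤ M)
    (h : ∀ m : ∀ i, E i, (∀ i, ‖m i‖ ≤ 1) → ‖f m‖ ≤ M) : ‖f‖ ≤ M := by
  refine opNorm_le_bound hM fun m => ?_
  by_cases hzero : ∃ i, m i = 0
  · obtain ⟨i, hi⟩ := hzero
    rw [f.map_coord_zero i hi, norm_zero]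
    positivity
  push Not at hzero
  have hpos : ∀ i, 0 < ‖m i‖ := fun i => norm_pos_iff.2 (hzero i)
  set c : ι → 𝕜 := fun i => ((‖m i‖⁻¹ : ℝ) : 𝕜)
  have hunit : ∀ i, ‖c i • m i‖ ≤ 1 := fun i => by
    rw [norm_smul, RCLike.norm_ofReal, abs_inv, abs_norm, inv_mul_cancel₀ (hpos i).ne']
  have hscaled := h _ hunit
  rw [f.map_smul_univ, norm_smul, norm_prod] at hscaled
  simp only [c, RCLike.norm_ofReal, abs_inv, abs_norm, Finset.prod_inv_distrib] at hscaled
  rwa [inv_mul_le_iff₀ (Finset.prod_pos fun i _ => hpos i), mul_comm] at hscaled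

lemma opNorm_le_of_isCover (f : ContinuousMultilinearMap 𝕜 E G) {δ : ℝ≥0}
    (hδ : Fintype.card ι * δ < 1) {T : ∀ i, Set (E i)} (hT : ∀ i, T i ⊆ closedBall 0 1)
    (hcover : ∀ i, IsCover δ (closedBall 0 1) (T i)) {t : ℝ}
    (ht : ∀ y : ∀ i, E i, (∀ i, y i ∈ T i) → ‖f y‖ ≤ t) :
    ‖f‖ ≤ t / (1 - Fintype.card ι * δ) := by
  have hnear : ∀ m : ∀ i, E i, (∀ i, ‖m i‖ ≤ 1) →
      ∃ y : ∀ i, E i, (∀ i, y i ∈ T i) ∧ ‖y‖ ≤ 1 ∧ ‖m - y‖ ≤ δ := by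
    intro m hm
    have := fun i => hcover i (mem_closedBall_zero_iff.2 (hm i))
    choose y hyT hy using this
    refine ⟨y, hyT, (pi_norm_le_iff_of_nonneg zero_le_one).2 fun i =>
      mem_closedBall_zero_iff.1 (hT i (hyT i)), (pi_norm_le_iff_of_nonneg δ.2).2 fun i => ?_⟩
    have : edist (m i) (y i) ≤ δ := hy i
    rw [edist_nndist, ENNReal.coe_le_coe, ← NNReal.coe_le_coe, coe_nndist, dist_eq_norm] at this
    exact this
  have ht0 : 0 ≤ t := by
    obtain ⟨y, hy, -⟩ := hnear 0 fun i => by simp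
    exact (norm_nonneg _).trans (ht y hy)
  have hself : ‖f‖ ≤ t + Fintype.card ι * δ * ‖f‖ := by
    refine opNorm_le_of_forall_norm_le_one f (by positivity) fun m hm => ?_
    obtain ⟨y, hyT, hy1, hmy⟩ := hnear m hm
    have hm1 : ‖m‖ ≤ 1 := (pi_norm_le_iff_of_nonneg zero_le_one).2 hm
    calc ‖f m‖ ≤ ‖f y‖ + ‖f m - f y‖ := norm_le_norm_add_norm_sub' _ _
      _ ≤ t + ‖f‖ * Fintype.card ι * max ‖m‖ ‖y‖ ^ (Fintype.card ι - 1) * ‖m - y‖ :=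
          add_le_add (ht y hyT) (f.norm_image_sub_le m y)
      _ ≤ t + ‖f‖ * Fintype.card ι * 1 * δ := by
          gcongr
          exact pow_le_one₀ (by positivity) (max_le hm1 hy1)
      _ = t + Fintype.card ι * δ * ‖f‖ := by ring
  rw [le_div_iff₀ (by linarith)]
  linarith

end ContinuousMultilinearMap

namespace PiLp

variable {ι : Type*} [Fintype ι] {β : ι → Type*} [∀ i, SeminormedAddCommGroup (β i)]

lemma norm_toLp_ofLp_le {p q : ℝ≥0∞} (hq : 0 < q.toReal) (hqp : q ≤ p) (hp : p ≠ ⊤)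
    (x : PiLp p β) :
    ‖WithLp.toLp q (WithLp.ofLp x)‖
      ≤ (Fintype.card ι : ℝ) ^ (1 / q.toReal - 1 / p.toReal) * ‖x‖ := by
  have hqp' : q.toReal ≤ p.toReal := ENNReal.toReal_mono hp hqp
  have hp0 : 0 < p.toReal := hq.trans_le hqp'
  rw [norm_eq_sum hq, norm_eq_sum hp0]
  set g : ι → ℝ := fun i => ‖x.ofLp i‖ ^ q.toReal
  have hg : ∀ i, 0 ≤ g i := fun i => by positivity
  have hpow : ∀ i, g i ^ (p.toReal / q.toReal) = ‖x.ofLp i‖ ^ p.toReal := fun i => by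
    rw [← rpow_mul (norm_nonneg _), mul_div_cancel₀ _ hq.ne']
  have hmean := Real.rpow_sum_le_const_mul_sum_rpow_of_nonneg Finset.univ
    ((one_le_div hq).2 hqp') fun i _ => hg i
  simp only [hpow, Finset.card_univ] at hmean
  calc (∑ i, g i) ^ (1 / q.toReal)
      = ((∑ i, g i) ^ (p.toReal / q.toReal)) ^ (1 / p.toReal) := by
        rw [← rpow_mul (Finset.sum_nonneg fun i _ => hg i)]
        congr 1; field_simp
    _ ≤ ((Fintype.card ι : ℝ) ^ (p.toReal / q.toReal - 1) * ∑ i, ‖x.ofLp i‖ ^ p.toReal)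
          ^ (1 / p.toReal) := by gcongr
    _ = _ := by
        rw [mul_rpow (by positivity) (by positivity), ← rpow_mul (by positivity)]
        congr 2
        field_simp

lemma norm_continuousLinearEquiv_symm_comp_le {𝕜 : Type*} [NontriviallyNormedField 𝕜]
    [∀ i, NormedSpace 𝕜 (β i)] {p q : ℝ≥0∞} [Fact (1 ≤ p)] [Fact (1 ≤ q)] (hqp : q ≤ p)
    (hp : p ≠ ⊤) :
    ‖((continuousLinearEquiv q 𝕜 β).symm : (∀ i, β i) →L[𝕜] PiLp q β).comp
        (continuousLinearEquiv p 𝕜 β : PiLp p β →L[𝕜] ∀ i, β i)‖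
      ≤ (Fintype.card ι : ℝ) ^ (1 / q.toReal - 1 / p.toReal) :=
  ContinuousLinearMap.opNorm_le_bound _ (by positivity) fun x =>
    norm_toLp_ofLp_le (ENNReal.toReal_pos (zero_lt_one.trans_le Fact.out).ne'
      (ne_top_of_le_ne_top hp hqp)) hqp hp x

end PiLp

section CoeffForm

variable {𝕂 : Type*} [RCLike 𝕂] {κ ι : Type*} [Fintype κ] [DecidableEq κ] [Fintype ι]

noncomputable def coeffForm (p : κ → ℝ≥0∞) (c : (κ → ι) → 𝕂) :
    ContinuousMultilinearMap 𝕂 (fun j : κ => PiLp (p j) (fun _ : ι => 𝕂)) 𝕂 :=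
  ∑ i, c i • (ContinuousMultilinearMap.mkPiAlgebra 𝕂 κ 𝕂).compContinuousLinearMap
    fun j => PiLp.proj (p j) (fun _ : ι => 𝕂) (i j)

lemma coeffForm_apply (p : κ → ℝ≥0∞) (c : (κ → ι) → 𝕂)
    (x : ∀ j, PiLp (p j) (fun _ : ι => 𝕂)) :
    coeffForm p c x = ∑ i, c i * ∏ j, (x j).ofLp (i j) := by
  simp [coeffForm]

lemma coeffForm_toLp_single [DecidableEq ι] (p : κ → ℝ≥0∞) (c : (κ → ι) → 𝕂) (i : κ → ι) :
    coeffForm p c (fun j => WithLp.toLp (p j) (Pi.single (i j) 1)) = c i := by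
  rw [coeffForm_apply, Finset.sum_eq_single i]
  · simp
  · intro i' _ hne
    obtain ⟨j, hj⟩ := Function.ne_iff.1 hne
    rw [Finset.prod_eq_zero (Finset.mem_univ j) (Pi.single_eq_of_ne hj _), mul_zero]
  · simp

lemma norm_coeffForm_le (p : κ → ℝ≥0∞) [∀ j, Fact (1 ≤ p j)] {q : ℝ≥0∞} [Fact (1 ≤ q)]
    (hqp : ∀ j, q ≤ p j) (hp : ∀ j, p j ≠ ⊤) (c : (κ → ι) → 𝕂) :
    ‖coeffForm p c‖
      ≤ ‖coeffForm (fun _ => q) c‖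
        * ∏ j, (Fintype.card ι : ℝ) ^ (1 / q.toReal - 1 / (p j).toReal) := by
  have hcomp : coeffForm p c = (coeffForm (fun _ => q) c).compContinuousLinearMap fun j =>
      ((PiLp.continuousLinearEquiv q 𝕂 fun _ : ι => 𝕂).symm : (ι → 𝕂) →L[𝕂] _).comp
        (PiLp.continuousLinearEquiv (p j) 𝕂 fun _ : ι => 𝕂 : _ →L[𝕂] ι → 𝕂) := by
    ext x
    simp [coeffForm_apply]
  rw [hcomp]
  refine (ContinuousMultilinearMap.norm_compContinuousLinearMap_le _ _).trans ?_
  gcongr with j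
  exact PiLp.norm_continuousLinearEquiv_symm_comp_le (hqp j) (hp j)

end CoeffForm

section KahaneSalemZygmund

variable (𝕂 : Type*) [RCLike 𝕂]

noncomputable def kszConstant (k : ℕ) : ℝ :=
  4 * √(finrank ℝ 𝕂 * k * log (4 * k + 5) + 2)

lemma kszConstant_pos (k : ℕ) : 0 < kszConstant 𝕂 k := by
  have : 0 ≤ log (4 * (k : ℝ) + 5) := log_nonneg (by linarith [k.cast_nonneg (α := ℝ)])
  unfold kszConstant
  positivity

variable {𝕂} {κ ι : Type*} [Fintype κ] [DecidableEq κ] [Fintype ι]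

lemma finrank_piLp_two : finrank ℝ (PiLp 2 fun _ : ι => 𝕂) = Fintype.card ι * finrank ℝ 𝕂 := by
  rw [(WithLp.linearEquiv 2 ℝ (ι → 𝕂)).finrank_eq, Module.finrank_pi_fintype, Finset.sum_const,
    Finset.card_univ, smul_eq_mul]

lemma sum_norm_prod_ofLp_sq (y : κ → PiLp 2 fun _ : ι => 𝕂) :
    ∑ i : κ → ι, ‖∏ j, (y j).ofLp (i j)‖ ^ 2 = ∏ j, ‖y j‖ ^ 2 := by
  simp only [norm_prod, ← Finset.prod_pow, PiLp.norm_sq_eq_of_L2]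
  exact (Fintype.prod_sum fun j m => ‖(y j).ofLp m‖ ^ 2).symm

lemma four_mul_exp_neg_two_lt_one : 4 * exp (-2) < 1 := by
  have := quadratic_le_exp_of_nonneg (x := 2) zero_le_two
  rw [exp_neg, ← div_eq_mul_inv, div_lt_one (exp_pos 2)]
  linarith

lemma exists_boolSign_forall_norm_coeffForm_two_le {T : Finset (PiLp 2 fun _ : ι => 𝕂)}
    (hT : (T : Set (PiLp 2 fun _ : ι => 𝕂)) ⊆ closedBall 0 1) {s : ℝ} (hs : 0 ≤ s)
    (hcard : (T.card : ℝ) ^ Fintype.card κ ≤ exp s) :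
    ∃ ε : (κ → ι) → Bool, ∀ y : κ → PiLp 2 (fun _ : ι => 𝕂), (∀ j, y j ∈ T) →
      ‖coeffForm (fun _ => 2) (fun i => (boolSign (ε i) : 𝕂)) y‖ ≤ 2 * √(s + 2) := by
  classical
  set S := Fintype.piFinset fun _ : κ => T
  have hcoeff : ∀ y ∈ S, ∑ i : κ → ι, ‖∏ j, (y j).ofLp (i j)‖ ^ 2 ≤ 1 := fun y hy => by
    rw [sum_norm_prod_ofLp_sq]
    exact Finset.prod_le_one (fun _ _ => by positivity) fun j _ =>
      pow_le_one₀ (norm_nonneg _) (mem_closedBall_zero_iff.1 (hT (Fintype.mem_piFinset.1 hy j)))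
  have hS : S.card * (4 * exp (-(2 * √(s + 2)) ^ 2 / 4)) < 1 := by
    have hScard : (S.card : ℝ) = (T.card : ℝ) ^ Fintype.card κ := by
      rw [Fintype.card_piFinset, Finset.prod_const, Finset.card_univ, Nat.cast_pow]
    have hexp : -(2 * √(s + 2)) ^ 2 / 4 = -s + -2 := by
      rw [mul_pow, sq_sqrt (by positivity)]; ring
    calc (S.card : ℝ) * (4 * exp (-(2 * √(s + 2)) ^ 2 / 4)) ≤ exp s * (4 * exp (-s + -2)) := by
          rw [hScard, hexp]; gcongr
      _ = 4 * exp (-2) := by rw [exp_add, exp_neg s]; field_simp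
      _ < 1 := four_mul_exp_neg_two_lt_one
  obtain ⟨ε, hε⟩ := exists_boolSign_forall_norm_sum_mul_le hcoeff (by positivity) hS
  exact ⟨ε, fun y hy => by rw [coeffForm_apply]; exact hε y (Fintype.mem_piFinset.2 hy)⟩

theorem exists_boolSign_norm_coeffForm_two_le [Nonempty ι] :
    ∃ ε : (κ → ι) → Bool, ‖coeffForm (fun _ => 2) fun i => (boolSign (ε i) : 𝕂)‖
      ≤ kszConstant 𝕂 (Fintype.card κ) * √(Fintype.card ι) := by
  set k := Fintype.card κ
  set n := Fintype.card ι
  set D := finrank ℝ 𝕂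
  set L := log (4 * (k : ℝ) + 5)
  have hL : 0 ≤ L := log_nonneg (by linarith [k.cast_nonneg (α := ℝ)])
  -- `kδ ≤ 1/2`, so extending the bound from the net to the ball loses a factor `2`.
  set δ : ℝ≥0 := (2 * k + 2)⁻¹
  have hδ : (δ : ℝ) = (2 * (k : ℝ) + 2)⁻¹ := by simp [δ]
  have hkδ : (k : ℝ) * δ ≤ 1 / 2 := by
    rw [hδ, ← div_eq_mul_inv, div_le_iff₀ (by positivity)]; linarith
  obtain ⟨T, hTball, hTcover, hTcard⟩ :=
    exists_finset_isCover_closedBall (E := PiLp 2 fun _ : ι => 𝕂) (δ := δ) (by positivity)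
  rw [finrank_piLp_two, hδ, div_inv_eq_mul] at hTcard
  have hTpow : (T.card : ℝ) ^ k ≤ exp ((n * D * k : ℕ) * L) := by
    rw [exp_nat_mul, exp_log (by positivity), pow_mul]
    refine pow_le_pow_left₀ (Nat.cast_nonneg _) (hTcard.trans_eq ?_) k
    rw [show (1 : ℝ) + 2 * (2 * k + 2) = 4 * k + 5 by ring]
  obtain ⟨ε, hε⟩ := exists_boolSign_forall_norm_coeffForm_two_le hTball (by positivity) hTpow
  refine ⟨ε, ?_⟩
  have hnorm := (coeffForm (fun _ => 2) fun i => (boolSign (ε i) : 𝕂)).opNorm_le_of_isCover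
    (hkδ.trans_lt (by norm_num)) (fun _ => hTball) (fun _ => hTcover) hε
  have hn : (1 : ℝ) ≤ n := by exact_mod_cast Fintype.card_pos
  calc _ ≤ 2 * √((n * D * k : ℕ) * L + 2) / (1 - k * δ) := hnorm
    _ ≤ 2 * √((n * D * k : ℕ) * L + 2) / (1 / 2) := by gcongr; linarith
    _ = 4 * √((n * D * k : ℕ) * L + 2) := by ring
    _ ≤ 4 * √((D * k * L + 2) * n) := by
        gcongr
        push_cast
        nlinarith [show 0 ≤ (D : ℝ) * k * L by positivity]
    _ = kszConstant 𝕂 k * √n := by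
        rw [sqrt_mul (by positivity), kszConstant]; ring

end KahaneSalemZygmund

lemma sqrt_mul_prod_rpow {κ : Type*} [Fintype κ] {x : ℝ} (hx : 0 < x) (a : κ → ℝ) :
    √x * ∏ j, x ^ (1 / 2 - a j) = x ^ (((Fintype.card κ : ℝ) + 1) / 2 - ∑ j, a j) := by
  rw [sqrt_eq_rpow, ← rpow_sum_of_pos hx, ← rpow_add hx, Finset.sum_sub_distrib, Finset.sum_const,
    Finset.card_univ, nsmul_eq_mul]
  ring_nf

/-- **Kahane–Salem–Zygmund inequality.** For each `k ≥ 1` there is `C_k > 0` such that for all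
`r₁, …, r_k ∈ [2, ∞)` and every `n ≥ 1` there exists a `k`-linear form
`A : ℓ_{r₁}^n × ⋯ × ℓ_{r_k}^n → 𝕂` with coefficients `A(e_{i₁}, …, e_{i_k}) ∈ {−1, +1}`
and `‖A‖ ≤ C_k ⬝ n^{(k+1)/2 − (1/r₁ + ⋯ + 1/r_k)}`. -/
theorem stmt12 (𝕂 : Type*) [RCLike 𝕂] (k : ℕ) :
    ∃ C : ℝ, 0 < C ∧ ∀ r : Fin k → ℝ, ∀ hr : (∀ i, 2 ≤ r i), ∀ n : ℕ, 0 < n →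
      haveI : ∀ i : Fin k, Fact (1 ≤ ENNReal.ofReal (r i)) := fun i =>
        ⟨ENNReal.one_le_ofReal.mpr (by linarith [hr i] )⟩
      ∃ A : ContinuousMultilinearMap 𝕂
          (fun i : Fin k => PiLp (ENNReal.ofReal (r i)) (fun _ : Fin n => 𝕂)) 𝕂,
        (∀ i : Fin k → Fin n,
          A (fun j => (WithLp.equiv (ENNReal.ofReal (r j)) (Fin n → 𝕂)).symm
              (Pi.single (i j) 1)) = 1 ∨
          A (fun j => (WithLp.equiv (ENNReal.ofReal (r j)) (Fin n → 𝕂)).symm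
              (Pi.single (i j) 1)) = -1) ∧
        ‖A‖ ≤ C * (n : ℝ) ^ (((k : ℝ) + 1) / 2 - ∑ i, 1 / r i) := by
  refine ⟨kszConstant 𝕂 k, kszConstant_pos 𝕂 k, fun r hr n hn => ?_⟩
  have : Nonempty (Fin n) := ⟨⟨0, hn⟩⟩
  have : ∀ j, Fact (1 ≤ ENNReal.ofReal (r j)) := fun j =>
    ⟨ENNReal.one_le_ofReal.2 (by linarith [hr j])⟩
  obtain ⟨ε, hε⟩ := exists_boolSign_norm_coeffForm_two_le (𝕂 := 𝕂) (κ := Fin k) (ι := Fin n)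
  refine ⟨coeffForm (fun j => ENNReal.ofReal (r j)) fun i => boolSign (ε i), fun i => ?_, ?_⟩
  · simp only [WithLp.equiv_symm_apply, coeffForm_toLp_single]
    cases ε i <;> simp
  · have hr' : ∀ j, (ENNReal.ofReal (r j)).toReal = r j := fun j =>
      ENNReal.toReal_ofReal (by linarith [hr j])
    have h2r : ∀ j, (2 : ℝ≥0∞) ≤ ENNReal.ofReal (r j) := fun j => by
      simpa using ENNReal.ofReal_le_ofReal (hr j)
    calc _ ≤ _ := norm_coeffForm_le _ h2r (fun j => ENNReal.ofReal_ne_top) _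
      _ ≤ kszConstant 𝕂 k * √n * ∏ j, (n : ℝ) ^ (1 / 2 - 1 / r j) := by
          simp only [hr', Fintype.card_fin, ENNReal.toReal_ofNat] at hε ⊢
          gcongr
      _ = _ := by rw [mul_assoc, sqrt_mul_prod_rpow (by exact_mod_cast hn), Fintype.card_fin]
end
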